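/- Let S₁₁, S₁₂, …, S₁ₙ be bounded operators on a complex Hilbert space H. The numerical radius of the n×n block operator matrix whose first row is (S₁₁, S₁₂, …, S₁ₙ) and all other rows zero is at most (1/2)[w(S₁₁) + √(w(S₁₁)² + ∑_{k=2}^{n} ‖S₁ₖ‖²)]. -/

import Mathlib

/-!
For a unit vector `x`, the quadratic form of the first-row block operator is
`⟪T x, x⟫ = ⟪S₀ x₀, x₀⟫ + ∑_{k ≠ 0} ⟪S_k x_k, x₀⟫`. With `a = ‖x₀‖`,
`b² = ∑_{k ≠ 0} ‖x_k‖² = 1 - a²` and `c² = ∑_{k ≠ 0} ‖S_k‖²`, Cauchy–Schwarz bounds its modulus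
by `w(S₀) a² + c a b`, and the maximum of this quadratic form over the unit circle is the top
eigenvalue `(w + √(w² + c²)) / 2` of `[[w, c/2], [c/2, 0]]`.
-/

noncomputable def numRadius {E : Type*} [NormedAddCommGroup E] [InnerProductSpace ℂ E]
    (T : E →L[ℂ] E) : ℝ :=
  sSup {r : ℝ | ∃ x : E, ‖x‖ = 1 ∧ r = ‖(inner ℂ (T x) x : ℂ)‖}

noncomputable def blockOp {H : Type*} [NormedAddCommGroup H] [InnerProductSpace ℂ H]
    (n : ℕ) (M : Fin n → Fin n → H →L[ℂ] H) :
    (PiLp 2 fun _ : Fin n => H) →L[ℂ] (PiLp 2 fun _ : Fin n => H) :=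
  (PiLp.continuousLinearEquiv 2 ℂ (fun _ : Fin n => H)).symm.toContinuousLinearMap ∘L
    (ContinuousLinearMap.pi fun i => ∑ j, (M i j).comp (ContinuousLinearMap.proj j)) ∘L
    (PiLp.continuousLinearEquiv 2 ℂ (fun _ : Fin n => H)).toContinuousLinearMap

theorem mul_sq_add_mul_mul_le_of_sq_add_sq_eq_one {w c a b : ℝ} (hab : a ^ 2 + b ^ 2 = 1) :
    w * a ^ 2 + c * b * a ≤ 1 / 2 * (w + √(w ^ 2 + c ^ 2)) := by
  -- Double-angle substitution `u = a² - b²`, `v = 2ab` puts `(u, v)` on the unit circle.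
  have hcs : (w * (a ^ 2 - b ^ 2) + c * (2 * a * b)) ^ 2 ≤ w ^ 2 + c ^ 2 := by
    have hcircle : (a ^ 2 - b ^ 2) ^ 2 + (2 * a * b) ^ 2 = 1 := by
      linear_combination (a ^ 2 + b ^ 2 + 1) * hab
    linear_combination (w ^ 2 + c ^ 2) * hcircle +
      sq_nonneg (w * (2 * a * b) - c * (a ^ 2 - b ^ 2))
  have := (le_abs_self _).trans (Real.abs_le_sqrt hcs)
  linear_combination (1 / 2) * this + (w / 2) * hab

section NumRadius

variable {E : Type*} [NormedAddCommGroup E] [InnerProductSpace ℂ E]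

theorem numRadius_nonneg (T : E →L[ℂ] E) : 0 ≤ numRadius T :=
  Real.sSup_nonneg (by rintro r ⟨x, -, rfl⟩; positivity)

theorem numRadius_le {T : E →L[ℂ] E} {C : ℝ} (hC : 0 ≤ C)
    (h : ∀ x : E, ‖x‖ = 1 → ‖(inner ℂ (T x) x : ℂ)‖ ≤ C) : numRadius T ≤ C :=
  Real.sSup_le (by rintro r ⟨x, hx, rfl⟩; exact h x hx) hC

theorem norm_inner_apply_self_le_numRadius_of_norm_eq_one (T : E →L[ℂ] E) {x : E}
    (hx : ‖x‖ = 1) : ‖(inner ℂ (T x) x : ℂ)‖ ≤ numRadius T := by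
  refine le_csSup ⟨‖T‖, ?_⟩ ⟨x, hx, rfl⟩
  rintro r ⟨y, hy, rfl⟩
  calc ‖(inner ℂ (T y) y : ℂ)‖ ≤ ‖T y‖ * ‖y‖ := norm_inner_le_norm _ _
    _ ≤ ‖T‖ * ‖y‖ * ‖y‖ := by gcongr; exact T.le_opNorm y
    _ = ‖T‖ := by rw [hy, mul_one, mul_one]

theorem norm_inner_apply_self_le_numRadius_mul (T : E →L[ℂ] E) (v : E) :
    ‖(inner ℂ (T v) v : ℂ)‖ ≤ numRadius T * ‖v‖ ^ 2 := by
  rcases eq_or_ne v 0 with rfl | hv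
  · simp
  have hv' : 0 < ‖v‖ := norm_pos_iff.2 hv
  have hunit : ‖((‖v‖⁻¹ : ℝ) : ℂ) • v‖ = 1 := by
    rw [norm_smul, Complex.norm_real, Real.norm_of_nonneg (by positivity),
      inv_mul_cancel₀ hv'.ne']
  have h := norm_inner_apply_self_le_numRadius_of_norm_eq_one T hunit
  rw [map_smul, inner_smul_left, inner_smul_right, norm_mul, norm_mul, Complex.norm_conj,
    Complex.norm_real, Real.norm_of_nonneg (by positivity), ← mul_assoc, ← sq,
    inv_pow, inv_mul_le_iff₀ (by positivity), mul_comm] at h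
  exact h

end NumRadius

theorem sum_norm_inner_apply_le {ι E F : Type*} [NormedAddCommGroup E] [NormedSpace ℂ E]
    [NormedAddCommGroup F] [InnerProductSpace ℂ F] (s : Finset ι) (S : ι → E →L[ℂ] F)
    (x : ι → E) (y : F) :
    ∑ k ∈ s, ‖(inner ℂ (S k (x k)) y : ℂ)‖ ≤
      √(∑ k ∈ s, ‖S k‖ ^ 2) * √(∑ k ∈ s, ‖x k‖ ^ 2) * ‖y‖ := by
  calc ∑ k ∈ s, ‖(inner ℂ (S k (x k)) y : ℂ)‖ ≤ ∑ k ∈ s, ‖S k‖ * ‖x k‖ * ‖y‖ := by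
        gcongr with k
        exact (norm_inner_le_norm _ _).trans (by gcongr; exact (S k).le_opNorm _)
    _ = (∑ k ∈ s, ‖S k‖ * ‖x k‖) * ‖y‖ := by rw [Finset.sum_mul]
    _ ≤ _ := by gcongr; exact Real.sum_mul_le_sqrt_mul_sqrt _ _ _

section BlockOp

variable {H : Type*} [NormedAddCommGroup H] [InnerProductSpace ℂ H]

theorem blockOp_apply (n : ℕ) (M : Fin n → Fin n → H →L[ℂ] H)
    (x : PiLp 2 fun _ : Fin n => H) (i : Fin n) :
    blockOp n M x i = ∑ j, M i j (x j) := by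
  simp [blockOp]

theorem inner_blockOp_firstRow_apply_self (n : ℕ) [NeZero n] (S : Fin n → H →L[ℂ] H)
    (x : PiLp 2 fun _ : Fin n => H) :
    (inner ℂ (blockOp n (fun i j => if i = 0 then S j else 0) x) x : ℂ) =
      ∑ j, inner ℂ (S j (x j)) (x 0) := by
  rw [PiLp.inner_apply, Finset.sum_eq_single_of_mem 0 (Finset.mem_univ _)]
  · simp [blockOp_apply, sum_inner]
  · intro i _ hi
    simp [blockOp_apply, hi]

end BlockOp

variable {H : Type*} [NormedAddCommGroup H] [InnerProductSpace ℂ H]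
theorem stmt18 (n : ℕ) [NeZero n] (S : Fin n → H →L[ℂ] H) :
    numRadius (blockOp n (fun i j => if i = 0 then S j else 0)) ≤
      (1 / 2) * (numRadius (S 0) +
        Real.sqrt (numRadius (S 0) ^ 2 +
          ∑ k ∈ Finset.univ.erase (0 : Fin n), ‖S k‖ ^ 2)) := by
  have hw := numRadius_nonneg (S 0)
  refine numRadius_le (by positivity) fun x hx => ?_
  have hunit : ‖x 0‖ ^ 2 + √(∑ k ∈ Finset.univ.erase 0, ‖x k‖ ^ 2) ^ 2 = 1 := by
    rw [Real.sq_sqrt (by positivity), Finset.add_sum_erase _ (fun k => ‖x k‖ ^ 2)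
      (Finset.mem_univ 0), ← PiLp.norm_sq_eq_of_L2, hx, one_pow]
  have hS : √(∑ k ∈ Finset.univ.erase 0, ‖S k‖ ^ 2) ^ 2 =
      ∑ k ∈ Finset.univ.erase 0, ‖S k‖ ^ 2 :=
    Real.sq_sqrt (by positivity)
  rw [inner_blockOp_firstRow_apply_self, ← Finset.add_sum_erase _ _ (Finset.mem_univ 0)]
  calc _ ≤ ‖(inner ℂ (S 0 (x 0)) (x 0) : ℂ)‖
          + ∑ k ∈ Finset.univ.erase 0, ‖(inner ℂ (S k (x k)) (x 0) : ℂ)‖ :=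
        (norm_add_le _ _).trans (add_le_add_right (norm_sum_le _ _) _)
    _ ≤ _ := add_le_add (norm_inner_apply_self_le_numRadius_mul _ _)
        (sum_norm_inner_apply_le _ _ _ _)
    _ ≤ _ := by
        have := mul_sq_add_mul_mul_le_of_sq_add_sq_eq_one
          (w := numRadius (S 0)) (c := √(∑ k ∈ Finset.univ.erase 0, ‖S k‖ ^ 2)) hunit
        rwa [hS] at this
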